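/- Let A₀ be a unital C*-algebra containing mutually orthogonal projections q_0, …, q_{n−1} with ∑_{i<n} q_i = 1 and q_i·A₀·q_j ≠ {0} for all i, j < n. For α : {0,…,n−1} → 𝕋 let u_α = ∑_{i<n} α(i)·q_i (a unitary of A₀). Then for all α, β : {0,…,n−1} → 𝕋, with I = {0,…,n−1}: Δ_I(α,β) ≤ sup_{a ∈ A₀, ‖a‖ ≤ 1} ‖u_α·a·u_α* − u_β·a·u_β*‖ ≤ 2·Δ_I(α,β). -/

import Mathlib

/-!
Write `u_c = ∑ c i • q i`. As the `q i` are orthogonal projections summing to `1`, such elements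
multiply coordinatewise, and `‖u_c‖ ≤ M` whenever all `‖c i‖ ≤ M` (compare `star u_c * u_c` with
`M ^ 2` in the order of the C⋆-algebra). On a normalised corner element `b ∈ q i A₀ q j`, `Ad u_c`
is multiplication by `c i * conj (c j)`, which gives the lower bound. For the upper bound, `Ad u`
is unchanged when `u` is multiplied by a phase, and `‖Ad u - Ad v‖ ≤ 2 ‖u - v‖` for contractions
`u, v`; the phase `γ = α 0 / β 0` makes every coefficient `α i - γ β i` of `u_α - γ u_β` at most
`Δ` in modulus.
-/

open Filter Topology MultiplierAlgebra

noncomputable section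

/-- `Δ_I(α,β) = max_{i,j ∈ I} |α(i)·conj(α(j)) − β(i)·conj(β(j))|`
(the maximum over the empty set being `0`). -/
def Delta (I : Finset ℕ) (α β : ℕ → Circle) : ℝ :=
  ((I ×ˢ I).sup fun p : ℕ × ℕ =>
    ‖(α p.1 : ℂ) * (starRingEnd ℂ) (α p.2 : ℂ) -
      (β p.1 : ℂ) * (starRingEnd ℂ) (β p.2 : ℂ)‖₊ : NNReal)

/-- `n(X,j)`: the `j`-th element of `{0} ∪ X` in increasing order. -/
def nEnum (X : Set ℕ) (j : ℕ) : ℕ := Nat.nth (· ∈ insert 0 X) j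

/-- `I(X,j) = [n(X,j), n(X,j+1))`, as a finite set of naturals. -/
def intvl (X : Set ℕ) (j : ℕ) : Finset ℕ := Finset.Ico (nEnum X j) (nEnum X (j + 1))

/-- Membership in `F_X`: `lim_j Δ_{I(X,j) ∪ I(X,j+1)}(α, 1) = 0`. -/
def memF (X : Set ℕ) (α : ℕ → Circle) : Prop :=
  Tendsto (fun j => Delta (intvl X j ∪ intvl X (j + 1)) α 1) atTop (𝓝 0)

/-- `Y ⊆* X`: almost inclusion, i.e. `Y \ X` is finite. -/
def AlmostSubset (Y X : Set ℕ) : Prop := (Y \ X).Finite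

open Finset ComplexConjugate

section OrthogonalFamily

variable {𝕜 A : Type*} [CommSemiring 𝕜] [Semiring A] [Algebra 𝕜 A] {n : ℕ} {q : ℕ → A}

theorem sum_smul_mul_of_lt (hidem : ∀ i < n, q i * q i = q i)
    (horth : ∀ i < n, ∀ j < n, i ≠ j → q i * q j = 0) (c : ℕ → 𝕜) {j : ℕ} (hj : j < n) :
    (∑ i ∈ range n, c i • q i) * q j = c j • q j := by
  rw [sum_mul, sum_eq_single_of_mem j (mem_range.2 hj)]
  · rw [smul_mul_assoc, hidem j hj]
  · intro i hi hij
    rw [smul_mul_assoc, horth i (mem_range.1 hi) j hj hij, smul_zero]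

theorem mul_sum_smul_of_lt (hidem : ∀ i < n, q i * q i = q i)
    (horth : ∀ i < n, ∀ j < n, i ≠ j → q i * q j = 0) (c : ℕ → 𝕜) {j : ℕ} (hj : j < n) :
    q j * (∑ i ∈ range n, c i • q i) = c j • q j := by
  rw [mul_sum, sum_eq_single_of_mem j (mem_range.2 hj)]
  · rw [mul_smul_comm, hidem j hj]
  · intro i hi hij
    rw [mul_smul_comm, horth j hj i (mem_range.1 hi) hij.symm, smul_zero]

theorem sum_smul_mul_sum_smul (hidem : ∀ i < n, q i * q i = q i)
    (horth : ∀ i < n, ∀ j < n, i ≠ j → q i * q j = 0) (c d : ℕ → 𝕜) :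
    (∑ i ∈ range n, c i • q i) * (∑ i ∈ range n, d i • q i) =
      ∑ i ∈ range n, (c i * d i) • q i := by
  rw [mul_sum]
  refine sum_congr rfl fun i hi => ?_
  rw [mul_smul_comm, sum_smul_mul_of_lt hidem horth c (mem_range.1 hi), smul_smul, mul_comm]

variable [StarRing 𝕜] [StarRing A] [StarModule 𝕜 A]

theorem star_sum_smul (hsa : ∀ i < n, star (q i) = q i) (c : ℕ → 𝕜) :
    star (∑ i ∈ range n, c i • q i) = ∑ i ∈ range n, star (c i) • q i := by
  rw [star_sum]
  refine sum_congr rfl fun i hi => ?_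
  rw [star_smul, hsa i (mem_range.1 hi)]

theorem sum_smul_mul_mul_star_sum_smul (hsa : ∀ i < n, star (q i) = q i)
    (hidem : ∀ i < n, q i * q i = q i) (horth : ∀ i < n, ∀ j < n, i ≠ j → q i * q j = 0)
    (c : ℕ → 𝕜) (a : A) {i j : ℕ} (hi : i < n) (hj : j < n) :
    (∑ k ∈ range n, c k • q k) * (q i * a * q j) * star (∑ k ∈ range n, c k • q k) =
      (c i * star (c j)) • (q i * a * q j) := by
  simp only [mul_assoc]
  rw [← mul_assoc _ (q i), sum_smul_mul_of_lt hidem horth c hi, star_sum_smul hsa,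
    mul_sum_smul_of_lt hidem horth _ hj]
  simp only [smul_mul_assoc, mul_smul_comm, smul_smul, mul_comm]

end OrthogonalFamily

section AdNorm

variable {A : Type*} [NormedRing A] [StarRing A]

def adNorm (u v : A) : ℝ := ⨆ a : {a : A // ‖a‖ ≤ 1}, ‖u * a * star u - v * a * star v‖

theorem adNorm_nonneg (u v : A) : 0 ≤ adNorm u v :=
  Real.iSup_nonneg fun _ => norm_nonneg _

theorem adNorm_circle_smul_right [NormedAlgebra ℂ A] [StarModule ℂ A] (u v : A) (z : Circle) :
    adNorm u (z • v) = adNorm u v := by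
  have hz : (z : ℂ) * star (z : ℂ) = 1 := by
    rw [Complex.star_def, Complex.mul_conj, Circle.normSq_coe, Complex.ofReal_one]
  unfold adNorm
  congr! 3 with a
  rw [Circle.smul_def, star_smul, smul_mul_assoc, smul_mul_assoc, mul_smul_comm, smul_smul, hz,
    one_smul]

variable [NormedStarGroup A]

theorem norm_mul_mul_star_sub_le {u v : A} (hu : ‖u‖ ≤ 1) (hv : ‖v‖ ≤ 1) (a : A) :
    ‖u * a * star u - v * a * star v‖ ≤ 2 * ‖u - v‖ * ‖a‖ := by
  have hdecomp : u * a * star u - v * a * star v =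
      (u - v) * a * star u + v * a * star (u - v) := by
    rw [star_sub]; noncomm_ring
  calc ‖u * a * star u - v * a * star v‖
      ≤ ‖u - v‖ * ‖a‖ * ‖star u‖ + ‖v‖ * ‖a‖ * ‖star (u - v)‖ := by
        rw [hdecomp]; exact (norm_add_le _ _).trans (add_le_add norm_mul₃_le norm_mul₃_le)
    _ ≤ ‖u - v‖ * ‖a‖ * 1 + 1 * ‖a‖ * ‖u - v‖ := by
        rw [norm_star, norm_star]; gcongr
    _ = 2 * ‖u - v‖ * ‖a‖ := by ring

theorem norm_mul_mul_star_sub_le_adNorm {u v : A} (hu : ‖u‖ ≤ 1) (hv : ‖v‖ ≤ 1) {a : A}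
    (ha : ‖a‖ ≤ 1) : ‖u * a * star u - v * a * star v‖ ≤ adNorm u v := by
  refine le_ciSup (f := fun a : {a : A // ‖a‖ ≤ 1} => ‖u * a * star u - v * a * star v‖)
    ⟨2 * ‖u - v‖, ?_⟩ ⟨a, ha⟩
  rintro _ ⟨b, rfl⟩
  exact (norm_mul_mul_star_sub_le hu hv b).trans
    (mul_le_of_le_one_right (by positivity) b.2)

theorem adNorm_le_two_mul_norm_sub {u v : A} (hu : ‖u‖ ≤ 1) (hv : ‖v‖ ≤ 1) :
    adNorm u v ≤ 2 * ‖u - v‖ := by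
  have : Nonempty {a : A // ‖a‖ ≤ 1} := ⟨⟨0, by simp⟩⟩
  exact ciSup_le fun a => (norm_mul_mul_star_sub_le hu hv a).trans
    (mul_le_of_le_one_right (by positivity) a.2)

theorem norm_sub_le_adNorm_of_conj_eq_smul [NormedAlgebra ℂ A] {u v b : A} {z w : ℂ}
    (hu : ‖u‖ ≤ 1) (hv : ‖v‖ ≤ 1) (hb : ‖b‖ = 1) (hub : u * b * star u = z • b)
    (hvb : v * b * star v = w • b) :
    ‖z - w‖ ≤ adNorm u v := by
  calc ‖z - w‖ = ‖u * b * star u - v * b * star v‖ := by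
        rw [hub, hvb, ← sub_smul, norm_smul, hb, mul_one]
    _ ≤ adNorm u v := norm_mul_mul_star_sub_le_adNorm hu hv hb.le

end AdNorm

section Delta

variable {I : Finset ℕ} {α β : ℕ → Circle}

theorem Delta_nonneg : 0 ≤ Delta I α β :=
  NNReal.coe_nonneg _

theorem norm_sub_le_Delta {i j : ℕ} (hi : i ∈ I) (hj : j ∈ I) :
    ‖(α i : ℂ) * conj (α j : ℂ) - β i * conj (β j : ℂ)‖ ≤ Delta I α β := by
  rw [Delta, ← coe_nnnorm, NNReal.coe_le_coe]
  exact le_sup (f := fun p : ℕ × ℕ =>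
      ‖(α p.1 : ℂ) * conj (α p.2 : ℂ) - β p.1 * conj (β p.2 : ℂ)‖₊)
    (show (i, j) ∈ I ×ˢ I from mem_product.2 ⟨hi, hj⟩)

theorem Delta_le {C : ℝ} (hC : 0 ≤ C)
    (h : ∀ i ∈ I, ∀ j ∈ I, ‖(α i : ℂ) * conj (α j : ℂ) - β i * conj (β j : ℂ)‖ ≤ C) :
    Delta I α β ≤ C := by
  rw [Delta, ← Real.coe_toNNReal C hC, NNReal.coe_le_coe]
  refine Finset.sup_le fun p hp => ?_
  rw [← NNReal.coe_le_coe, Real.coe_toNNReal C hC, coe_nnnorm]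
  exact h p.1 (mem_product.1 hp).1 p.2 (mem_product.1 hp).2

theorem norm_sub_div_mul_le_Delta {i j : ℕ} (hi : i ∈ I) (hj : j ∈ I) :
    ‖(α i : ℂ) - ((α j / β j : Circle) : ℂ) * β i‖ ≤ Delta I α β := by
  have h : (α i : ℂ) - ((α j / β j : Circle) : ℂ) * β i =
      α j * ((α i : ℂ) * conj (α j : ℂ) - β i * conj (β j : ℂ)) := by
    rw [← Circle.coe_inv_eq_conj, ← Circle.coe_inv_eq_conj, Circle.coe_div, Circle.coe_inv,
      Circle.coe_inv]
    field_simp [Circle.coe_ne_zero]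
  rw [h, norm_mul, Circle.norm_coe, one_mul]
  exact norm_sub_le_Delta hi hj

end Delta

section CStarAlgebra

variable {A : Type*} [CStarAlgebra A] {n : ℕ} {q : ℕ → A}

theorem norm_sum_smul_le (hsa : ∀ i < n, star (q i) = q i) (hidem : ∀ i < n, q i * q i = q i)
    (horth : ∀ i < n, ∀ j < n, i ≠ j → q i * q j = 0) (hsum : ∑ i ∈ range n, q i = 1)
    {c : ℕ → ℂ} {M : ℝ} (hM : 0 ≤ M) (hc : ∀ i < n, ‖c i‖ ≤ M) :
    ‖∑ i ∈ range n, c i • q i‖ ≤ M := by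
  let := CStarAlgebra.spectralOrder A
  let := CStarAlgebra.spectralOrderedRing A
  set x := ∑ i ∈ range n, c i • q i
  have hxx : star x * x = ∑ i ∈ range n, (‖c i‖ ^ 2 : ℝ) • q i := by
    rw [star_sum_smul hsa, sum_smul_mul_sum_smul hidem horth]
    refine sum_congr rfl fun i _ => ?_
    rw [Complex.star_def, Complex.conj_mul', ← Complex.ofReal_pow, Complex.coe_smul]
  have hle : star x * x ≤ algebraMap ℝ A (M ^ 2) := by
    rw [Algebra.algebraMap_eq_smul_one, ← hsum, smul_sum, hxx, ← sub_nonneg,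
      ← sum_sub_distrib]
    refine sum_nonneg fun i hi => ?_
    have hi := mem_range.1 hi
    rw [← sub_smul]
    exact smul_nonneg (sub_nonneg.2 (pow_le_pow_left₀ (norm_nonneg _) (hc i hi) 2))
      (IsStarProjection.nonneg ⟨hidem i hi, hsa i hi⟩)
  have hsq : ‖x‖ ^ 2 ≤ M ^ 2 := by
    rw [sq, ← CStarRing.norm_star_mul_self]
    exact (CStarAlgebra.norm_le_iff_le_algebraMap _ (by positivity)
      (star_mul_self_nonneg x)).2 hle
  exact (pow_le_pow_iff_left₀ (norm_nonneg _) hM two_ne_zero).1 hsq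

theorem norm_sub_le_adNorm_sum_smul (hsa : ∀ i < n, star (q i) = q i)
    (hidem : ∀ i < n, q i * q i = q i) (horth : ∀ i < n, ∀ j < n, i ≠ j → q i * q j = 0)
    {i j : ℕ} (hi : i < n) (hj : j < n)
    (hij : ∃ a : A, q i * a * q j ≠ 0) {c d : ℕ → ℂ} (hc : ‖∑ k ∈ range n, c k • q k‖ ≤ 1)
    (hd : ‖∑ k ∈ range n, d k • q k‖ ≤ 1) :
    ‖c i * conj (c j) - d i * conj (d j)‖ ≤
      adNorm (∑ k ∈ range n, c k • q k) (∑ k ∈ range n, d k • q k) := by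
  obtain ⟨a, ha⟩ := hij
  have hb : ‖q i * (‖q i * a * q j‖⁻¹ • a) * q j‖ = 1 := by
    rw [mul_smul_comm, smul_mul_assoc, norm_smul, norm_inv, norm_norm,
      inv_mul_cancel₀ (norm_ne_zero_iff.2 ha)]
  exact norm_sub_le_adNorm_of_conj_eq_smul hc hd hb
    (sum_smul_mul_mul_star_sum_smul hsa hidem horth c _ hi hj)
    (sum_smul_mul_mul_star_sum_smul hsa hidem horth d _ hi hj)

end CStarAlgebra

/-- STATEMENT 14: for a unital C*-algebra with orthogonal projections summing to `1`
and `q_i A₀ q_j ≠ 0`, conjugation by the unitaries `u_α = ∑ α(i) q_i` satisfies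
`Δ_I(α,β) ≤ ‖Ad u_α − Ad u_β‖ ≤ 2 Δ_I(α,β)`. -/
theorem ad_norm_bounds (A₀ : Type*) [CStarAlgebra A₀] (n : ℕ) (q : ℕ → A₀)
    (hsa : ∀ i < n, star (q i) = q i) (hidem : ∀ i < n, q i * q i = q i)
    (horth : ∀ i < n, ∀ j < n, i ≠ j → q i * q j = 0)
    (hsum : ∑ i ∈ Finset.range n, q i = 1)
    (hnonzero : ∀ i < n, ∀ j < n, ∃ a : A₀, q i * a * q j ≠ 0)
    (α β : ℕ → Circle) :
    Delta (Finset.range n) α β ≤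
      (⨆ a : {a : A₀ // ‖a‖ ≤ 1},
        ‖(∑ i ∈ Finset.range n, (α i : ℂ) • q i) * a *
            star (∑ i ∈ Finset.range n, (α i : ℂ) • q i) -
          (∑ i ∈ Finset.range n, (β i : ℂ) • q i) * a *
            star (∑ i ∈ Finset.range n, (β i : ℂ) • q i)‖) ∧
    (⨆ a : {a : A₀ // ‖a‖ ≤ 1},
        ‖(∑ i ∈ Finset.range n, (α i : ℂ) • q i) * a *
            star (∑ i ∈ Finset.range n, (α i : ℂ) • q i) -
          (∑ i ∈ Finset.range n, (β i : ℂ) • q i) * a *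
            star (∑ i ∈ Finset.range n, (β i : ℂ) • q i)‖) ≤
      2 * Delta (Finset.range n) α β := by
  have hu (γ : ℕ → Circle) : ‖∑ i ∈ range n, (γ i : ℂ) • q i‖ ≤ 1 :=
    norm_sum_smul_le hsa hidem horth hsum zero_le_one fun i _ => (Circle.norm_coe (γ i)).le
  change Delta _ α β ≤ adNorm _ _ ∧ adNorm _ _ ≤ _
  refine ⟨Delta_le (adNorm_nonneg _ _) fun i hi j hj => ?_, ?_⟩
  · have hi := mem_range.1 hi
    have hj := mem_range.1 hj
    exact norm_sub_le_adNorm_sum_smul hsa hidem horth hi hj (hnonzero i hi j hj) (hu α) (hu β)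
  set γ : Circle := α 0 / β 0
  have hdiff : ∑ i ∈ range n, (α i : ℂ) • q i - γ • ∑ i ∈ range n, (β i : ℂ) • q i =
      ∑ i ∈ range n, ((α i : ℂ) - γ * β i) • q i := by
    rw [Circle.smul_def, smul_sum, ← sum_sub_distrib]
    simp only [smul_smul, sub_smul]
  calc adNorm _ _ = adNorm (∑ i ∈ range n, (α i : ℂ) • q i)
        (γ • ∑ i ∈ range n, (β i : ℂ) • q i) := (adNorm_circle_smul_right _ _ γ).symm
    _ ≤ 2 * ‖∑ i ∈ range n, (α i : ℂ) • q i - γ • ∑ i ∈ range n, (β i : ℂ) • q i‖ :=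
        adNorm_le_two_mul_norm_sub (hu α) ((Circle.norm_smul γ _).trans_le (hu β))
    _ ≤ 2 * Delta (range n) α β := by
        rw [hdiff]
        gcongr
        exact norm_sum_smul_le hsa hidem horth hsum Delta_nonneg fun i hi =>
          norm_sub_div_mul_le_Delta (mem_range.2 hi) (mem_range.2 (Nat.zero_lt_of_lt hi))
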